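/- arXiv:1502.00273 — 2 statements merged into one kernel-verified Lean document; each statement's English description precedes it below -/
import Mathlib

section
/- (Invariance of the affine closure under the Dynkin automorphism) Fix n≥3. Let i_{n-1}: B(Ã_{n-1}) → B(B_n) be the homomorphism σ_i ↦ σ_i, a_n ↦ φ_nσ_{n-1}φ_n^{-1} where φ_n = tσ_1⋯σ_{n-1}, let _nI: B(B_n) → B(A_n) be the injective homomorphism σ_i ↦ σ_{i+1}, t ↦ σ_1², and let x̄_n = _nI ∘ i_{n-1}. If x, y ∈ B(Ã_{n-1}) satisfy i_{n-1}(y) = φ_n · i_{n-1}(x) · φ_n^{-1} (i.e., y is the image of x under the Dynkin automorphism), then x̄_n(y) and x̄_n(x) are conjugate in B(A_n), and hence are Markov equivalent (so the affine closures of x and y coincide). -/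
/-- Relators of the `A`-type braid group `B(A n)`: generator `i : Fin n` stands for `σ_{i+1}`. -/
def braidRelsA (n : ℕ) : Set (FreeGroup (Fin n)) :=
  { r | (∃ i j : Fin n, (i : ℕ) + 2 ≤ (j : ℕ) ∧
          r = FreeGroup.of i * FreeGroup.of j * (FreeGroup.of j * FreeGroup.of i)⁻¹) ∨
        (∃ i j : Fin n, (j : ℕ) = (i : ℕ) + 1 ∧
          r = FreeGroup.of i * FreeGroup.of j * FreeGroup.of i *
              (FreeGroup.of j * FreeGroup.of i * FreeGroup.of j)⁻¹) }

/-- The `A`-type braid group `B(A_n)` with `n` generators `σ_1, …, σ_n`. -/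
abbrev BraidA (n : ℕ) : Type := PresentedGroup (braidRelsA n)

/-- Relators of the `B`-type braid group `B(B_{n+1})`: generator `some i` (`i : Fin n`)
stands for `σ_{i+1}`, and `none` stands for `t`. -/
def braidRelsB (n : ℕ) : Set (FreeGroup (Option (Fin n))) :=
  { r | (∃ i j : Fin n, (i : ℕ) + 2 ≤ (j : ℕ) ∧
          r = FreeGroup.of (some i) * FreeGroup.of (some j) *
              (FreeGroup.of (some j) * FreeGroup.of (some i))⁻¹) ∨
        (∃ i j : Fin n, (j : ℕ) = (i : ℕ) + 1 ∧
          r = FreeGroup.of (some i) * FreeGroup.of (some j) * FreeGroup.of (some i) *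
              (FreeGroup.of (some j) * FreeGroup.of (some i) * FreeGroup.of (some j))⁻¹) ∨
        (∃ i : Fin n, 1 ≤ (i : ℕ) ∧
          r = FreeGroup.of (some i) * FreeGroup.of none *
              (FreeGroup.of none * FreeGroup.of (some i))⁻¹) ∨
        (∃ i : Fin n, (i : ℕ) = 0 ∧
          r = FreeGroup.of (some i) * FreeGroup.of none * FreeGroup.of (some i) *
              FreeGroup.of none *
              (FreeGroup.of none * FreeGroup.of (some i) * FreeGroup.of none *
                FreeGroup.of (some i))⁻¹) }

/-- The `B`-type braid group `B(B_{n+1})`, with generators `σ_1, …, σ_n` and `t`. -/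
abbrev BraidB (n : ℕ) : Type := PresentedGroup (braidRelsB n)

/-- `φ_{n+1} = t σ_1 σ_2 ⋯ σ_n` in `B(B_{n+1})`. -/
noncomputable def phiB (n : ℕ) : BraidB n :=
  PresentedGroup.of none *
    ((List.finRange n).map fun i => (PresentedGroup.of (some i) : BraidB n)).prod

/-- `a_{n+1} = φ_{n+1} σ_n φ_{n+1}⁻¹` in `B(B_{n+1})`. -/
noncomputable def aB (n : ℕ) (h : 0 < n) : BraidB n :=
  phiB n * PresentedGroup.of (some (⟨n - 1, by omega⟩ : Fin n)) * (phiB n)⁻¹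

/-- Relators of the affine braid group `B(Ã_n)`: generator `some i` (`i : Fin n`)
stands for `σ_{i+1}`, and `none` stands for `a_{n+1}`. -/
def braidRelsAff (n : ℕ) : Set (FreeGroup (Option (Fin n))) :=
  { r | (∃ i j : Fin n, (i : ℕ) + 2 ≤ (j : ℕ) ∧
          r = FreeGroup.of (some i) * FreeGroup.of (some j) *
              (FreeGroup.of (some j) * FreeGroup.of (some i))⁻¹) ∨
        (∃ i j : Fin n, (j : ℕ) = (i : ℕ) + 1 ∧
          r = FreeGroup.of (some i) * FreeGroup.of (some j) * FreeGroup.of (some i) *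
              (FreeGroup.of (some j) * FreeGroup.of (some i) * FreeGroup.of (some j))⁻¹) ∨
        (∃ i : Fin n, 1 ≤ (i : ℕ) ∧ (i : ℕ) + 2 ≤ n ∧
          r = FreeGroup.of (some i) * FreeGroup.of none *
              (FreeGroup.of none * FreeGroup.of (some i))⁻¹) ∨
        (∃ i : Fin n, ((i : ℕ) = 0 ∨ (i : ℕ) + 1 = n) ∧
          r = FreeGroup.of (some i) * FreeGroup.of none * FreeGroup.of (some i) *
              (FreeGroup.of none * FreeGroup.of (some i) * FreeGroup.of none)⁻¹) }

/-- The affine (`Ã`-type) braid group `B(Ã_n)`, with generators `σ_1, …, σ_n` and `a_{n+1}`. -/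
abbrev BraidAff (n : ℕ) : Type := PresentedGroup (braidRelsAff n)

/-- One Markov move on the disjoint union `⨆ m, B(A_m)`, relative to a family `inc`
of tower inclusions `B(A_m) → B(A_{m+1})`: either replace `a * b` by `b * a` in the same
group, or replace `inc m x * σ_{m+1}` (in `B(A_{m+1})`) by `x` (in `B(A_m)`). -/
def MarkovStep (inc : ∀ m : ℕ, BraidA m →* BraidA (m + 1)) :
    (Σ m : ℕ, BraidA m) → (Σ m : ℕ, BraidA m) → Prop := fun p q =>
  (∃ (m : ℕ) (a b : BraidA m), p = ⟨m, a * b⟩ ∧ q = ⟨m, b * a⟩) ∨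
  (∃ (m : ℕ) (x : BraidA m),
      p = ⟨m + 1, inc m x * PresentedGroup.of (Fin.last m)⟩ ∧ q = ⟨m, x⟩)

/-- Markov equivalence: the equivalence relation generated by the Markov moves. -/
def MarkovEq (inc : ∀ m : ℕ, BraidA m →* BraidA (m + 1)) :
    (Σ m : ℕ, BraidA m) → (Σ m : ℕ, BraidA m) → Prop :=
  Relation.EqvGen (MarkovStep inc)

theorem MarkovEq.of_isConj (inc : ∀ m : ℕ, BraidA m →* BraidA (m + 1)) {m : ℕ}
    {a b : BraidA m} (hab : IsConj a b) : MarkovEq inc ⟨m, a⟩ ⟨m, b⟩ := by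
  obtain ⟨c, rfl⟩ := isConj_iff.mp hab
  -- `a = c⁻¹ * (c * a * c⁻¹ * c)`, and one commutation move swaps the two factors.
  refine Relation.EqvGen.rel _ _ (Or.inl ⟨m, c⁻¹, c * a * c⁻¹ * c, ?_, ?_⟩) <;> congr 1 <;> group

theorem stmt_18 (n : ℕ)
    (inc : ∀ m : ℕ, BraidA m →* BraidA (m + 1))
    (iB : BraidAff (n - 1) →* BraidB (n - 1))
    (I : BraidB (n - 1) →* BraidA n)
    (x y : BraidAff (n - 1))
    (h : iB y = phiB (n - 1) * iB x * (phiB (n - 1))⁻¹) :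
    IsConj (I (iB x)) (I (iB y)) ∧
    MarkovEq inc ⟨n, I (iB y)⟩ ⟨n, I (iB x)⟩ := by
  have hconj : IsConj (I (iB x)) (I (iB y)) :=
    I.map_isConj (isConj_iff.mpr ⟨phiB (n - 1), h.symm⟩)
  exact ⟨hconj, MarkovEq.of_isConj inc hconj.symm⟩
end

section
/- (Invariance of the affine closure under multiplication by a_{n+1}) Fix n≥3. Let F_n: B(Ã_{n-1}) → B(Ã_n) be the injective homomorphism σ_i ↦ σ_i, a_n ↦ σ_na_{n+1}σ_n^{-1}. For each m, let i_{m-1}: B(Ã_{m-1}) → B(B_m) be the homomorphism σ_i ↦ σ_i, a_m ↦ φ_mσ_{m-1}φ_m^{-1} (with φ_m = tσ_1⋯σ_{m-1}), let _mI: B(B_m) → B(A_m) be the injective homomorphism σ_i ↦ σ_{i+1}, t ↦ σ_1², and set x̄_m = _mI ∘ i_{m-1}. Then for every x ∈ B(Ã_{n-1}), the element (n+1, x̄_{n+1}(F_n(x)·a_{n+1})) of the disjoint union ⨆_{m≥1} B(A_m) is Markov equivalent to (n, x̄_n(x)); in other words, the affine closure of F_n(x)·a_{n+1} equals the affine closure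 of x. -/
/-!
Write `ι` for the tower inclusion `B(A_n) → B(A_{n+1})` and `P` for the image of `φ_n` in
`B(A_n)`. The homomorphisms `x̄_{n+1} ∘ F_n` and `ι ∘ x̄_n` agree: on the `σ_i` this is clear,
and on `a_n` it says that conjugating the image `ι(P) σ_{n+1} ι(P)⁻¹` of `a_{n+1}` by `σ_{n+1}`
gives the image `ι(P σ_n P⁻¹)` of `a_n`, which follows from the braid relation between `σ_n`
and `σ_{n+1}` because `σ_{n+1}` commutes with `ι(P) σ_n⁻¹ = σ_1² σ_2 ⋯ σ_{n-1}`. Hence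
`x̄_{n+1}(F_n(x) a_{n+1}) = ι(x̄_n(x) P) σ_{n+1} ι(P)⁻¹`, which is conjugate to
`ι(P⁻¹ x̄_n(x) P) σ_{n+1}`; one Markov destabilization and a last conjugation give `x̄_n(x)`.
-/

open PresentedGroup

namespace BraidA

theorem commute_of {m : ℕ} {i j : Fin m} (h : (i : ℕ) + 2 ≤ j) :
    Commute (of i : BraidA m) (of j) :=
  mk_eq_mk_of_mul_inv_mem (Or.inl ⟨i, j, h, rfl⟩)

theorem of_braid {m : ℕ} {i j : Fin m} (h : (j : ℕ) = i + 1) :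
    (of i : BraidA m) * of j * of i = of j * of i * of j :=
  mk_eq_mk_of_mul_inv_mem (Or.inr ⟨i, j, h, rfl⟩)

end BraidA

namespace MarkovEq

variable {inc : ∀ m : ℕ, BraidA m →* BraidA (m + 1)}

theorem mul_comm {m : ℕ} (a b : BraidA m) : MarkovEq inc ⟨m, a * b⟩ ⟨m, b * a⟩ :=
  .rel _ _ (Or.inl ⟨m, a, b, rfl, rfl⟩)

theorem conj {m : ℕ} (g x : BraidA m) : MarkovEq inc ⟨m, g * x * g⁻¹⟩ ⟨m, x⟩ := by
  simpa using mul_comm (inc := inc) (g * x) g⁻¹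

theorem stabilize {m : ℕ} (x : BraidA m) :
    MarkovEq inc ⟨m + 1, inc m x * of (Fin.last m)⟩ ⟨m, x⟩ :=
  .rel _ _ (Or.inr ⟨m, x, rfl, rfl⟩)

theorem inc_mul_conj_last {m : ℕ} (x q : BraidA m) :
    MarkovEq inc ⟨m + 1, inc m x * (inc m q * of (Fin.last m) * (inc m q)⁻¹)⟩ ⟨m, x⟩ := by
  have h : inc m x * (inc m q * of (Fin.last m) * (inc m q)⁻¹) =
      inc m q * (inc m (q⁻¹ * x * q) * of (Fin.last m)) * (inc m q)⁻¹ := by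
    simp only [map_mul, map_inv]
    group
  rw [h]
  refine .trans _ _ _ (conj _ _) (.trans _ _ _ (stabilize _) ?_)
  have h' := conj (inc := inc) q⁻¹ x
  rwa [inv_inv] at h'

end MarkovEq

theorem conj_conj_eq_of_braid {G : Type*} [Group G] {a b c : G}
    (hab : a * b * a = b * a * b) (hac : Commute a c) :
    a * (c * b * a * (c * b)⁻¹) * a⁻¹ = c * b * b * (c * b)⁻¹ :=
  calc a * (c * b * a * (c * b)⁻¹) * a⁻¹
      = (a * c) * b * a * b⁻¹ * (a * c)⁻¹ := by group
    _ = c * (a * b * a) * b⁻¹ * a⁻¹ * c⁻¹ := by rw [hac.eq]; group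
    _ = c * b * b * (c * b)⁻¹ := by rw [hab]; group

/-- The image of `φ_{k+1}` under `B(B_{k+1}) → B(A_{k+1})`, `t ↦ σ_1²`, `σ_i ↦ σ_{i+1}`. -/
noncomputable def phiA (k : ℕ) : BraidA (k + 1) :=
  of 0 ^ 2 * ((List.finRange k).map fun i => (of i.succ : BraidA (k + 1))).prod

/-- The image of `a_{k+2} = φ_{k+2} σ_{k+1} φ_{k+2}⁻¹` in `B(A_{k+2})`. -/
noncomputable def aA (k : ℕ) : BraidA (k + 2) :=
  phiA (k + 1) * of (Fin.last (k + 1)) * (phiA (k + 1))⁻¹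

theorem map_phiB {k : ℕ} (J : BraidB k →* BraidA (k + 1))
    (hJσ : ∀ i, J (of (some i)) = of i.succ) (hJt : J (of none) = of 0 ^ 2) :
    J (phiB k) = phiA k := by
  simp [phiB, phiA, map_list_prod, hJσ, hJt, List.map_map, Function.comp_def]

theorem map_aB {k : ℕ} (h : 0 < k + 1) (J : BraidB (k + 1) →* BraidA (k + 2))
    (hJσ : ∀ i, J (of (some i)) = of i.succ) (hJt : J (of none) = of 0 ^ 2) :
    J (aB (k + 1) h) = aA k := by
  change J (phiB (k + 1) * of (some (Fin.last k)) * (phiB (k + 1))⁻¹) = _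
  simp [map_phiB J hJσ hJt, hJσ, aA]

section Tower

variable {inc : ∀ m : ℕ, BraidA m →* BraidA (m + 1)}
  (hinc : ∀ (m : ℕ) (i : Fin m), inc m (of i) = of i.castSucc)
include hinc

theorem commute_inc_inc_last (k : ℕ) (x : BraidA k) :
    Commute (inc (k + 1) (inc k x)) (of (Fin.last (k + 1))) := by
  have h : Subgroup.closure (Set.range (of : Fin k → BraidA k)) ≤
      (Subgroup.centralizer {of (Fin.last (k + 1))}).comap ((inc (k + 1)).comp (inc k)) := by
    rw [Subgroup.closure_le]
    rintro _ ⟨i, rfl⟩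
    rw [SetLike.mem_coe, Subgroup.mem_comap, MonoidHom.comp_apply, hinc, hinc,
      Subgroup.mem_centralizer_singleton_iff]
    exact (BraidA.commute_of (by simp only [Fin.val_castSucc, Fin.val_last]; omega)).eq
  rw [closure_range_of] at h
  exact Subgroup.mem_centralizer_singleton_iff.mp (h (Subgroup.mem_top x))

theorem phiA_succ (k : ℕ) : phiA (k + 1) = inc (k + 1) (phiA k) * of (Fin.last (k + 1)) := by
  simp [phiA, List.finRange_succ_last, map_list_prod, hinc, mul_assoc, List.map_map,
    Function.comp_def]

theorem aA_succ (k : ℕ) :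
    aA (k + 1) = inc (k + 2) (phiA (k + 1)) * of (Fin.last (k + 2)) *
      (inc (k + 2) (phiA (k + 1)))⁻¹ := by
  rw [aA, phiA_succ hinc]
  group

theorem conj_last_aA (k : ℕ) :
    of (Fin.last (k + 2)) * aA (k + 1) * (of (Fin.last (k + 2)))⁻¹ = inc (k + 2) (aA k) := by
  have hP : inc (k + 2) (phiA (k + 1)) =
      inc (k + 2) (inc (k + 1) (phiA k)) * of (Fin.last (k + 1)).castSucc := by
    rw [phiA_succ hinc, map_mul, hinc]
  rw [aA_succ hinc, aA, map_mul, map_mul, map_inv, hinc, hP]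
  exact conj_conj_eq_of_braid (BraidA.of_braid (by simp)).symm
    (commute_inc_inc_last hinc (k + 1) (phiA k)).symm

end Tower

theorem stmt_19 (n : ℕ) (hn : 3 ≤ n)
    (inc : ∀ m : ℕ, BraidA m →* BraidA (m + 1))
    (hinc : ∀ (m : ℕ) (i : Fin m),
      inc m (PresentedGroup.of i) = PresentedGroup.of i.castSucc)
    (F : BraidAff (n - 1) →* BraidAff n)
    (hF1 : ∀ i : Fin (n - 1), F (PresentedGroup.of (some i)) =
      PresentedGroup.of (some (i.castLE (by omega))))
    (hF2 : F (PresentedGroup.of none) =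
      PresentedGroup.of (some (⟨n - 1, by omega⟩ : Fin n)) * PresentedGroup.of none *
        (PresentedGroup.of (some (⟨n - 1, by omega⟩ : Fin n)))⁻¹)
    (iBm : BraidAff (n - 1) →* BraidB (n - 1))
    (hiBm1 : ∀ i : Fin (n - 1), iBm (PresentedGroup.of (some i)) = PresentedGroup.of (some i))
    (hiBm2 : iBm (PresentedGroup.of none) = aB (n - 1) (by omega))
    (iBn : BraidAff n →* BraidB n)
    (hiBn1 : ∀ i : Fin n, iBn (PresentedGroup.of (some i)) = PresentedGroup.of (some i))
    (hiBn2 : iBn (PresentedGroup.of none) = aB n (by omega))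
    (Im : BraidB (n - 1) →* BraidA n)
    (hIm1 : ∀ i : Fin (n - 1), Im (PresentedGroup.of (some i)) =
      PresentedGroup.of (⟨(i : ℕ) + 1, by have := i.isLt; omega⟩ : Fin n))
    (hIm2 : Im (PresentedGroup.of none) = PresentedGroup.of (⟨0, by omega⟩ : Fin n) ^ 2)
    (In : BraidB n →* BraidA (n + 1))
    (hIn1 : ∀ i : Fin n, In (PresentedGroup.of (some i)) =
      PresentedGroup.of (⟨(i : ℕ) + 1, by have := i.isLt; omega⟩ : Fin (n + 1)))
    (hIn2 : In (PresentedGroup.of none) = PresentedGroup.of (⟨0, by omega⟩ : Fin (n + 1)) ^ 2) :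
    ∀ x : BraidAff (n - 1),
      MarkovEq inc
        ⟨n + 1, In (iBn (F x * PresentedGroup.of none))⟩
        ⟨n, Im (iBm x)⟩ := by
  obtain ⟨k, rfl⟩ : ∃ k, n = k + 2 := ⟨n - 2, by omega⟩
  have hIn_a : In (iBn (of none)) = aA (k + 1) := by rw [hiBn2, map_aB _ In hIn1 hIn2]
  have hIm_a : Im (iBm (of none)) = aA k := by rw [hiBm2]; exact map_aB _ Im hIm1 hIm2
  have hcomp : In.comp (iBn.comp F) = (inc (k + 2)).comp (Im.comp iBm) := by
    refine PresentedGroup.ext fun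
      | some i => ?_
      | none => ?_
    · simp only [MonoidHom.comp_apply, hF1, hiBn1, hIn1, hiBm1, hIm1, hinc]
      rfl
    · simp only [MonoidHom.comp_apply, hF2, map_mul, map_inv, hiBn1, hIn1, hIn_a, hIm_a]
      exact conj_last_aA hinc k
  intro x
  rw [map_mul, map_mul, ← MonoidHom.comp_apply iBn F, ← MonoidHom.comp_apply In, hcomp,
    hIn_a, aA_succ hinc]
  exact MarkovEq.inc_mul_conj_last _ _
end
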